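/- Let T > 0, C > 0, k ≥ 0, m > k with m ≥ 2, K > 0 and λ, ε, β > 0. Let w : (0,T)×H → ℝ be bounded on bounded subsets of (0,T)×H and satisfy w(t,x) ≤ C(1+‖x‖^k) for all (t,x) ∈ (0,T)×H. Then for every R > 0 there exists M > 0 such that whenever the sup-convolution v = w^{λ,ε,β} is Fréchet differentiable at a point (t,x) ∈ (0,T)×B_R, one has |v_t(t,x)| ≤ M and there exists q ∈ H with ‖q‖ ≤ M such that the spatial Fréchet derivative satisfies Dv(t,x) = Bq. -/

import Mathlib

/-!
Because `w` grows at most like `‖y‖ ^ k` while the penalty grows like `‖y‖ ^ m` with `m > k`,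
the objective of the sup-convolution is bounded above, and for all points near `(t, x)` every
near-maximiser `(s, y)` has `‖y‖ ≤ ρ` with `ρ` depending only on `R`. Comparing the objective at
`(t, x)` and at `(t, x) + r • (τ, h)` for one common near-maximiser, convexity of `z ↦ ⟪B z, z⟫`
and of `s ↦ s ^ 2` gives `v ((t, x) + r • (τ, h)) - v (t, x) ≤ r (|τ| T / β + (ρ + R) ‖B h‖ / ε)`,
hence the same bound for `D (τ, h)`. So `|v_t| ≤ T / β`, and `h ↦ D (0, h)` is bounded by a
multiple of `‖B h‖`: it factors through `range B`, extends by Hahn–Banach, and the Riesz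
representative `q` of the extension satisfies `D (0, h) = ⟪q, B h⟫ = ⟪B q, h⟫`.
-/

open scoped InnerProductSpace
open Set Filter Topology

/-- The sup-convolution
`w^{λ,ε,β}(t,x) = sup_{(s,y)∈(0,T)×H} { w(s,y) − ‖x−y‖₋₁²/(2ε) − (t−s)²/(2β) − λ e^{2mK(T−s)}‖y‖^m }`,
where `‖z‖₋₁² = ⟨Bz,z⟩`. -/
noncomputable def supConv {H : Type*} [NormedAddCommGroup H] [InnerProductSpace ℝ H]
    (B : H →L[ℝ] H) (T m K lam ε β : ℝ) (w : ℝ → H → ℝ) (t : ℝ) (x : H) : ℝ :=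
  sSup ((fun p : ℝ × H =>
      w p.1 p.2 - ⟪B (x - p.2), x - p.2⟫_ℝ / (2 * ε) - (t - p.1) ^ 2 / (2 * β)
        - lam * Real.exp (2 * m * K * (T - p.1)) * ‖p.2‖ ^ m) ''
    (Set.Ioo 0 T ×ˢ (Set.univ : Set H)))

theorem tendsto_mul_one_add_rpow_sub_mul_rpow_atBot {C lam k m : ℝ} (hlam : 0 < lam)
    (hm : 0 < m) (hkm : k < m) :
    Tendsto (fun r : ℝ => C * (1 + r ^ k) - lam * r ^ m) atTop atBot := by
  have hdecay : Tendsto (fun r : ℝ => C * r ^ (k - m) - lam) atTop (𝓝 (C * 0 - lam)) := by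
    refine ((tendsto_rpow_neg_atTop (sub_pos.2 hkm)).const_mul C).sub_const lam |>.congr ?_
    intro r
    rw [neg_sub]
  have hprod := (tendsto_rpow_atTop hm).atTop_mul_neg (by linarith) hdecay
  refine (tendsto_atBot_add_const_left _ C hprod).congr' ?_
  filter_upwards [eventually_gt_atTop 0] with r hr
  have hpow : r ^ m * r ^ (k - m) = r ^ k := by rw [← Real.rpow_add hr]; ring_nf
  linear_combination C * hpow

theorem exists_forall_mul_one_add_rpow_sub_mul_rpow_le {C lam k m : ℝ} (hC : 0 ≤ C)
    (hlam : 0 < lam) (hk : 0 ≤ k) (hkm : k < m) :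
    ∃ A, ∀ r, 0 ≤ r → C * (1 + r ^ k) - lam * r ^ m ≤ A := by
  obtain ⟨ρ, hρ⟩ := eventually_atTop.1 <|
    (tendsto_mul_one_add_rpow_sub_mul_rpow_atBot (C := C) hlam (hk.trans_lt hkm) hkm
      ).eventually_le_atBot 0
  refine ⟨max 0 (C * (1 + |ρ| ^ k)), fun r hr => ?_⟩
  rcases le_total ρ r with hρr | hrρ
  · exact (hρ r hρr).trans (le_max_left _ _)
  · have hpow : r ^ k ≤ |ρ| ^ k := Real.rpow_le_rpow hr (hrρ.trans (le_abs_self ρ)) hk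
    have : 0 ≤ lam * r ^ m := by positivity
    refine le_max_of_le_right ?_
    nlinarith

theorem csSup_image_sub_csSup_image_le {ι : Type*} {S : Set ι} {f g : ι → ℝ} (hS : S.Nonempty)
    (hg : BddAbove (g '' S)) {ℓ s : ℝ} (hℓ : ℓ < sSup (f '' S))
    (h : ∀ i ∈ S, ℓ ≤ f i → f i - g i ≤ s) : sSup (f '' S) - sSup (g '' S) ≤ s := by
  refine le_of_forall_pos_le_add fun δ hδ => ?_
  obtain ⟨_, ⟨i, hi, rfl⟩, hlt⟩ :=
    exists_lt_of_lt_csSup (hS.image f) (max_lt hℓ (sub_lt_self _ hδ))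
  have hfg := h i hi ((le_max_left _ _).trans hlt.le)
  have hgi := le_csSup hg (mem_image_of_mem g hi)
  have hfi := (le_max_right _ _).trans_lt hlt
  linarith

theorem abs_apply_le_of_forall_apply_le {E : Type*} [AddCommGroup E] [Module ℝ E]
    {f : E →ₗ[ℝ] ℝ} {N : E → ℝ}
    (hN : ∀ u, N (-u) = N u) (hf : ∀ u, f u ≤ N u) (u : E) : |f u| ≤ N u :=
  abs_le.2 ⟨by simpa [hN] using neg_le_neg (hf (-u)), hf u⟩

theorem HasFDerivAt.apply_le_of_eventually_sub_le {E : Type*} [NormedAddCommGroup E]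
    [NormedSpace ℝ E] {f : E → ℝ} {f' : E →L[ℝ] ℝ} {a u : E} {σ : ℝ} (hf : HasFDerivAt f f' a)
    (h : ∀ᶠ r in 𝓝[>] (0 : ℝ), f (a + r • u) - f a ≤ r * σ) : f' u ≤ σ := by
  have hline : HasDerivAt (fun r : ℝ => f (a + r • u)) (f' u) 0 := by
    have hpath : HasDerivAt (fun r : ℝ => a + r • u) u 0 := by
      simpa using ((hasDerivAt_id (0 : ℝ)).smul_const u).const_add a
    exact hf.comp_hasDerivAt_of_eq (0 : ℝ) hpath (by simp)
  refine le_of_tendsto hline.tendsto_slope_zero_right ?_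
  filter_upwards [h, self_mem_nhdsWithin] with r hr (hr0 : 0 < r)
  rw [zero_add, zero_smul, add_zero, smul_eq_mul, inv_mul_le_iff₀ hr0]
  linarith

theorem ContinuousLinearMap.IsPositive.inner_map_self_add_two_inner_le {H : Type*}
    [NormedAddCommGroup H] [InnerProductSpace ℝ H] {B : H →L[ℝ] H} (hB : B.IsPositive)
    (a h : H) : ⟪B a, a⟫_ℝ + 2 * ⟪B a, h⟫_ℝ ≤ ⟪B (a + h), a + h⟫_ℝ := by
  have hsymm : ⟪B h, a⟫_ℝ = ⟪B a, h⟫_ℝ := by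
    rw [hB.inner_left_eq_inner_right, real_inner_comm]
  have := hB.inner_nonneg_left h
  simp only [map_add, inner_add_left, inner_add_right, hsymm]
  linarith

theorem IsSelfAdjoint.exists_norm_le_inner_map_eq {H : Type*} [NormedAddCommGroup H]
    [InnerProductSpace ℝ H] [CompleteSpace H] {B : H →L[ℝ] H} (hB : IsSelfAdjoint B)
    (f : H →L[ℝ] ℝ) {c : ℝ}
    (hc : 0 ≤ c) (hf : ∀ h, |f h| ≤ c * ‖B h‖) :
    ∃ q : H, ‖q‖ ≤ c ∧ ∀ h, f h = ⟪B q, h⟫_ℝ := by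
  let Bₗ : H →ₗ[ℝ] H := B
  have hker : LinearMap.ker Bₗ ≤ LinearMap.ker (f : H →ₗ[ℝ] ℝ) := fun h hh => by
    have hBh : B h = 0 := hh
    simpa [hBh] using hf h
  let φ : LinearMap.range Bₗ →ₗ[ℝ] ℝ :=
    ((LinearMap.ker Bₗ).liftQ f hker).comp Bₗ.quotKerEquivRange.symm.toLinearMap
  have hφ : ∀ h, φ ⟨B h, LinearMap.mem_range_self Bₗ h⟩ = f h := fun h =>
    (congrArg ((LinearMap.ker Bₗ).liftQ (f : H →ₗ[ℝ] ℝ) hker)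
      (Bₗ.quotKerEquivRange_symm_apply_image h _) :)
  have hφc : ∀ z, ‖φ z‖ ≤ c * ‖z‖ := by
    rintro ⟨_, h, rfl⟩
    rw [Real.norm_eq_abs]
    exact (hφ h).symm ▸ hf h
  obtain ⟨g, hg, hgn⟩ := exists_extension_norm_eq _ (φ.mkContinuous c hφc)
  refine ⟨(InnerProductSpace.toDual ℝ H).symm g, ?_, fun h => ?_⟩
  · rw [LinearIsometryEquiv.norm_map, hgn]
    exact LinearMap.mkContinuous_norm_le _ hc _
  · rw [show ⟪B _, h⟫_ℝ = _ from hB.isSymmetric _ h, InnerProductSpace.toDual_symm_apply,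
      ← hφ h]
    exact (hg ⟨B h, LinearMap.mem_range_self Bₗ h⟩).symm

/-- The function of `q = (s, y)` whose supremum over `(0,T) × H` is `supConv` at `p = (t, x)`. -/
noncomputable def supConvObjective {H : Type*} [NormedAddCommGroup H] [InnerProductSpace ℝ H]
    (B : H →L[ℝ] H) (T m K lam ε β : ℝ) (w : ℝ → H → ℝ) (q p : ℝ × H) : ℝ :=
  w q.1 q.2 - ⟪B (p.2 - q.2), p.2 - q.2⟫_ℝ / (2 * ε) - (p.1 - q.1) ^ 2 / (2 * β)
    - lam * Real.exp (2 * m * K * (T - q.1)) * ‖q.2‖ ^ m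

section SupConvolution

variable {H : Type*} [NormedAddCommGroup H] [InnerProductSpace ℝ H] {B : H →L[ℝ] H}
  {T m K lam ε β : ℝ} {w : ℝ → H → ℝ}

theorem supConv_eq_sSup (t : ℝ) (x : H) :
    supConv B T m K lam ε β w t x =
      sSup ((supConvObjective B T m K lam ε β w · (t, x)) '' (Ioo 0 T ×ˢ univ)) :=
  rfl

theorem supConvObjective_le_of_growth (hB : B.IsPositive) (hε : 0 ≤ ε) (hβ : 0 ≤ β)
    (hlam : 0 ≤ lam) (hm : 0 ≤ m) (hK : 0 ≤ K) {C k : ℝ}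
    (hgrowth : ∀ t ∈ Ioo 0 T, ∀ x : H, w t x ≤ C * (1 + ‖x‖ ^ k)) {q : ℝ × H}
    (hq : q ∈ Ioo 0 T ×ˢ univ) (p : ℝ × H) :
    supConvObjective B T m K lam ε β w q p ≤ C * (1 + ‖q.2‖ ^ k) - lam * ‖q.2‖ ^ m := by
  have hw := hgrowth q.1 hq.1 q.2
  have hexp : 1 ≤ Real.exp (2 * m * K * (T - q.1)) :=
    Real.one_le_exp (by have := sub_nonneg.2 hq.1.2.le; positivity)
  have hquad : 0 ≤ ⟪B (p.2 - q.2), p.2 - q.2⟫_ℝ / (2 * ε) :=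
    div_nonneg (hB.inner_nonneg_left _) (by positivity)
  have htime : 0 ≤ (p.1 - q.1) ^ 2 / (2 * β) := by positivity
  have hpen : lam * ‖q.2‖ ^ m ≤ lam * Real.exp (2 * m * K * (T - q.1)) * ‖q.2‖ ^ m := by
    have : 0 ≤ lam * ‖q.2‖ ^ m := by positivity
    nlinarith
  unfold supConvObjective
  linarith

theorem bddAbove_supConvObjective_image (hB : B.IsPositive) (hε : 0 ≤ ε) (hβ : 0 ≤ β)
    (hlam : 0 < lam) (hK : 0 ≤ K) {C k : ℝ} (hC : 0 ≤ C) (hk : 0 ≤ k) (hkm : k < m)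
    (hgrowth : ∀ t ∈ Ioo 0 T, ∀ x : H, w t x ≤ C * (1 + ‖x‖ ^ k)) (p : ℝ × H) :
    BddAbove ((supConvObjective B T m K lam ε β w · p) '' (Ioo 0 T ×ˢ univ)) := by
  obtain ⟨A, hA⟩ := exists_forall_mul_one_add_rpow_sub_mul_rpow_le hC hlam hk hkm
  refine ⟨A, forall_mem_image.2 fun q hq => ?_⟩
  exact (supConvObjective_le_of_growth hB hε hβ hlam.le (hk.trans hkm.le) hK hgrowth hq p).trans
    (hA _ (norm_nonneg _))

theorem norm_le_of_le_supConvObjective (hB : B.IsPositive) (hε : 0 ≤ ε) (hβ : 0 ≤ β)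
    (hlam : 0 ≤ lam) (hm : 0 ≤ m) (hK : 0 ≤ K) {C k : ℝ}
    (hgrowth : ∀ t ∈ Ioo 0 T, ∀ x : H, w t x ≤ C * (1 + ‖x‖ ^ k)) {ρ ℓ : ℝ}
    (hρ : ∀ r, ρ ≤ r → C * (1 + r ^ k) - lam * r ^ m < ℓ) {q : ℝ × H}
    (hq : q ∈ Ioo 0 T ×ˢ univ) {p : ℝ × H} (hle : ℓ ≤ supConvObjective B T m K lam ε β w q p) :
    ‖q.2‖ ≤ ρ :=
  le_of_not_gt fun hlt =>
    ((hle.trans (supConvObjective_le_of_growth hB hε hβ hlam hm hK hgrowth hq p)).trans_lt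
      (hρ _ hlt.le)).false

theorem sub_le_supConvObjective_self (hlam : 0 ≤ lam) (hm : 0 ≤ m) (hK : 0 ≤ K) {t R : ℝ}
    {x : H} (ht : 0 ≤ t) (hx : ‖x‖ ≤ R) :
    w t x - lam * Real.exp (2 * m * K * T) * R ^ m ≤
      supConvObjective B T m K lam ε β w (t, x) (t, x) := by
  have hexp : Real.exp (2 * m * K * (T - t)) ≤ Real.exp (2 * m * K * T) := by
    gcongr
    linarith
  have hpow : ‖x‖ ^ m ≤ R ^ m := Real.rpow_le_rpow (norm_nonneg x) hx hm
  simp only [supConvObjective, sub_self, inner_zero_right, zero_div, sub_zero, ne_eq,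
    OfNat.ofNat_ne_zero, not_false_eq_true, zero_pow]
  gcongr

theorem eventually_lt_supConv
    (hbdd : ∀ p, BddAbove ((supConvObjective B T m K lam ε β w · p) '' (Ioo 0 T ×ˢ univ)))
    {q : ℝ × H} (hq : q ∈ Ioo 0 T ×ˢ univ) {p₀ : ℝ × H} {a : ℝ}
    (ha : a < supConvObjective B T m K lam ε β w q p₀) :
    ∀ᶠ p in 𝓝 p₀, a < supConv B T m K lam ε β w p.1 p.2 := by
  have hcont : Continuous (supConvObjective B T m K lam ε β w q) := by
    unfold supConvObjective
    fun_prop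
  filter_upwards [hcont.continuousAt.eventually (lt_mem_nhds ha)] with p hp
  exact hp.trans_le (le_csSup (hbdd p) (mem_image_of_mem _ hq))

theorem supConvObjective_add_smul_sub_le (hB : B.IsPositive) (hε : 0 < ε) (hβ : 0 < β)
    {q : ℝ × H} (hq : q.1 ∈ Ioo 0 T) {ρ : ℝ} (hqρ : ‖q.2‖ ≤ ρ) {t R : ℝ} {x : H}
    (ht : t ∈ Ioo 0 T) (hx : ‖x‖ ≤ R) {r : ℝ} (hr : 0 ≤ r) (u : ℝ × H) :
    supConvObjective B T m K lam ε β w q ((t, x) + r • u) -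
        supConvObjective B T m K lam ε β w q (t, x) ≤
      r * (|u.1| * T / β + (ρ + R) * ‖B u.2‖ / ε) := by
  have hquad := hB.inner_map_self_add_two_inner_le (x - q.2) (r • u.2)
  have hspace : -⟪B (x - q.2), u.2⟫_ℝ ≤ (ρ + R) * ‖B u.2‖ := by
    have ha : ‖x - q.2‖ ≤ ρ + R := (norm_sub_le _ _).trans (by linarith)
    rw [hB.inner_left_eq_inner_right, ← inner_neg_left]
    exact (real_inner_le_norm _ _).trans (by rw [norm_neg]; gcongr)
  have htime : -(u.1 * (t - q.1)) ≤ |u.1| * T := by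
    have : |t - q.1| ≤ T :=
      abs_sub_le_iff.2 ⟨by linarith [ht.2, hq.1], by linarith [ht.1, hq.2]⟩
    exact (neg_le_abs _).trans (by rw [abs_mul]; gcongr)
  have hspace' : (⟪B (x - q.2), x - q.2⟫_ℝ - ⟪B (x - q.2 + r • u.2), x - q.2 + r • u.2⟫_ℝ) /
      (2 * ε) ≤ r * ((ρ + R) * ‖B u.2‖ / ε) := by
    rw [inner_smul_right] at hquad
    rw [div_le_iff₀ (by positivity)]
    field_simp
    nlinarith
  have htime' : ((t - q.1) ^ 2 - (t + r * u.1 - q.1) ^ 2) / (2 * β) ≤ r * (|u.1| * T / β) := by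
    rw [div_le_iff₀ (by positivity)]
    field_simp
    nlinarith [sq_nonneg (r * u.1)]
  have hx' : x + r • u.2 - q.2 = x - q.2 + r • u.2 := by abel
  simp only [supConvObjective, Prod.fst_add, Prod.snd_add, Prod.smul_fst, Prod.smul_snd,
    smul_eq_mul, hx']
  rw [sub_div] at hspace' htime'
  linarith

theorem supConv_fderiv_apply_le (hB : B.IsPositive) (hε : 0 < ε) (hβ : 0 < β) {t R ρ ℓ : ℝ}
    {x : H} (ht : t ∈ Ioo 0 T) (hx : ‖x‖ ≤ R)
    (hbdd : ∀ p, BddAbove ((supConvObjective B T m K lam ε β w · p) '' (Ioo 0 T ×ˢ univ)))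
    (hlow : ∀ᶠ p in 𝓝 (t, x), ℓ < supConv B T m K lam ε β w p.1 p.2)
    (hloc : ∀ q ∈ Ioo 0 T ×ˢ univ, ∀ p,
      ℓ ≤ supConvObjective B T m K lam ε β w q p → ‖q.2‖ ≤ ρ)
    {D : ℝ × H →L[ℝ] ℝ}
    (hD : HasFDerivAt (fun p : ℝ × H => supConv B T m K lam ε β w p.1 p.2) D (t, x))
    (u : ℝ × H) : D u ≤ |u.1| * T / β + (ρ + R) * ‖B u.2‖ / ε := by
  refine hD.apply_le_of_eventually_sub_le ?_
  have hpath : Tendsto (fun r : ℝ => (t, x) + r • u) (𝓝[>] 0) (𝓝 (t, x)) := by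
    have hcont : Continuous fun r : ℝ => (t, x) + r • u := by fun_prop
    exact (hcont.tendsto' 0 _ (by simp)).mono_left nhdsWithin_le_nhds
  filter_upwards [hpath.eventually hlow, self_mem_nhdsWithin] with r hr (hr0 : 0 < r)
  simp only [supConv_eq_sSup, Prod.mk.eta] at hr ⊢
  refine csSup_image_sub_csSup_image_le ?_ (hbdd _) hr fun q hq hℓ => ?_
  · exact ⟨(t, x), ht, mem_univ _⟩
  exact supConvObjective_add_smul_sub_le hB hε hβ hq.1 (hloc q hq _ hℓ) ht hx hr0.le u

end SupConvolution

theorem supConv_derivative_structure_general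
    {H : Type*} [NormedAddCommGroup H] [InnerProductSpace ℝ H] [CompleteSpace H]
    (B : H →L[ℝ] H) (hBsa : IsSelfAdjoint B) (hBpos : ∀ x : H, 0 ≤ ⟪B x, x⟫_ℝ)
    (T C k m K lam ε β : ℝ)
    (hT : 0 < T) (hC : 0 < C) (hk : 0 ≤ k) (hkm : k < m)
    (hK : 0 < K) (hlam : 0 < lam) (hε : 0 < ε) (hβ : 0 < β)
    (w : ℝ → H → ℝ)
    (hbdd : ∀ R > (0 : ℝ), ∃ M : ℝ, ∀ t ∈ Set.Ioo (0 : ℝ) T, ∀ x : H, ‖x‖ ≤ R → |w t x| ≤ M)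
    (hgrowth : ∀ t ∈ Set.Ioo (0 : ℝ) T, ∀ x : H, w t x ≤ C * (1 + ‖x‖ ^ k)) :
    ∀ R > (0 : ℝ), ∃ M > (0 : ℝ), ∀ t ∈ Set.Ioo (0 : ℝ) T, ∀ x : H, ‖x‖ < R →
      ∀ D : ℝ × H →L[ℝ] ℝ,
        HasFDerivAt (fun p : ℝ × H => supConv B T m K lam ε β w p.1 p.2) D (t, x) →
          |D ((1 : ℝ), (0 : H))| ≤ M ∧
          ∃ q : H, ‖q‖ ≤ M ∧ ∀ h : H, D ((0 : ℝ), h) = ⟪B q, h⟫_ℝ := by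
  have hB : B.IsPositive := (B.isPositive_iff').2 ⟨hBsa, hBpos⟩
  have hm : 0 < m := hk.trans_lt hkm
  have habove := bddAbove_supConvObjective_image (w := w) (T := T) hB hε.le hβ.le hlam hK.le hC.le
    hk hkm hgrowth
  intro R hR
  obtain ⟨Mw, hMw⟩ := hbdd R hR
  set L := Mw + lam * Real.exp (2 * m * K * T) * R ^ m + 1
  obtain ⟨ρ, hρ⟩ := eventually_atTop.1 <|
    ((tendsto_mul_one_add_rpow_sub_mul_rpow_atBot (C := C) hlam hm hkm).eventually_lt_atBot
      (-L)).and (eventually_ge_atTop 0)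
  have hρ0 := (hρ ρ le_rfl).2
  refine ⟨T / β + (ρ + R) / ε, by positivity, fun t ht x hx D hD => ?_⟩
  have hloc := fun q (hq : q ∈ Ioo 0 T ×ˢ univ) p ↦ norm_le_of_le_supConvObjective (p := p) hB
    hε.le hβ.le hlam.le hm.le hK.le hgrowth (fun r hr ↦ (hρ r hr).1) hq
  have hlow : ∀ᶠ p in 𝓝 (t, x), -L < supConv B T m K lam ε β w p.1 p.2 := by
    refine eventually_lt_supConv (q := (t, x)) habove ⟨ht, mem_univ x⟩ ?_
    linarith [(abs_le.1 (hMw t ht x hx.le)).1, sub_le_supConvObjective_self (B := B) (T := T)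
      (ε := ε) (β := β) (w := w) hlam.le hm.le hK.le ht.1.le hx.le]
  have hD_le := abs_apply_le_of_forall_apply_le (f := D.toLinearMap) (fun u => by simp)
    (supConv_fderiv_apply_le hB hε hβ ht hx.le habove hlow hloc hD)
  refine ⟨(hD_le (1, 0)).trans ?_, ?_⟩
  · simp only [abs_one, one_mul, map_zero, norm_zero, mul_zero, zero_div, add_zero,
      le_add_iff_nonneg_right]
    positivity
  obtain ⟨q, hq, hDq⟩ := hBsa.exists_norm_le_inner_map_eq (D.comp (.inr ℝ ℝ H))
    (c := (ρ + R) / ε) (by positivity) fun h => (hD_le (0, h)).trans_eq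
      (by simp only [abs_zero, zero_mul, zero_div, zero_add]; ring)
  exact ⟨q, hq.trans (le_add_of_nonneg_left (by positivity)), hDq⟩

/-- Lemma 4.2(iii) (sup-convolution case): for every `R > 0` there is `M > 0` such that at
every point `(t,x) ∈ (0,T) × B_R` of Fréchet differentiability of `v = w^{λ,ε,β}` one has
`|v_t(t,x)| ≤ M` and `Dv(t,x) = Bq` for some `q` with `‖q‖ ≤ M`. -/
theorem supConv_derivative_structure
    {H : Type*} [NormedAddCommGroup H] [InnerProductSpace ℝ H] [CompleteSpace H]
    [TopologicalSpace.SeparableSpace H]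
    (B : H →L[ℝ] H) (hBsa : IsSelfAdjoint B) (hBpos : ∀ x : H, 0 ≤ ⟪B x, x⟫_ℝ)
    (T C k m K lam ε β : ℝ)
    (hT : 0 < T) (hC : 0 < C) (hk : 0 ≤ k) (hkm : k < m) (hm : 2 ≤ m)
    (hK : 0 < K) (hlam : 0 < lam) (hε : 0 < ε) (hβ : 0 < β)
    (w : ℝ → H → ℝ)
    (hbdd : ∀ R > (0 : ℝ), ∃ M : ℝ, ∀ t ∈ Set.Ioo (0 : ℝ) T, ∀ x : H, ‖x‖ ≤ R → |w t x| ≤ M)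
    (hgrowth : ∀ t ∈ Set.Ioo (0 : ℝ) T, ∀ x : H, w t x ≤ C * (1 + ‖x‖ ^ k)) :
    ∀ R > (0 : ℝ), ∃ M > (0 : ℝ), ∀ t ∈ Set.Ioo (0 : ℝ) T, ∀ x : H, ‖x‖ < R →
      ∀ D : ℝ × H →L[ℝ] ℝ,
        HasFDerivAt (fun p : ℝ × H => supConv B T m K lam ε β w p.1 p.2) D (t, x) →
          |D ((1 : ℝ), (0 : H))| ≤ M ∧
          ∃ q : H, ‖q‖ ≤ M ∧ ∀ h : H, D ((0 : ℝ), h) = ⟪B q, h⟫_ℝ :=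
  supConv_derivative_structure_general B hBsa hBpos T C k m K lam ε β hT hC hk hkm hK hlam hε hβ w
    hbdd hgrowth
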